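/- arXiv:2106.04700 — 5 statements merged into one kernel-verified Lean document; each statement's English description precedes it below -/
import Mathlib

section
/- For all real x, y with 0 < x ≤ 1 and 0 < y, if y ≤ 1 then y/x - 1 - Real.log(y/x) ≥ (x-y)²/(2x). -/
lemma log_barrier_aux_le_one (t : ℝ) (ht0 : 0 < t) (ht1 : t ≤ 1) :
    t - 1 - Real.log t ≥ (1 - t) ^ 2 / 2 := by
  set f : ℝ → ℝ := fun s => s - 1 - Real.log s - (1 - s) ^ 2 / 2 with hf
  have key : AntitoneOn f (Set.Icc t 1) := by
    apply antitoneOn_of_deriv_nonpos (convex_Icc t 1)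
    · apply ContinuousOn.sub
      · apply ContinuousOn.sub
        · exact (continuousOn_id.sub continuousOn_const)
        · exact Real.continuousOn_log.mono
            (fun s hs => ne_of_gt (lt_of_lt_of_le ht0 hs.1))
      · fun_prop
    · apply DifferentiableOn.sub
      · apply DifferentiableOn.sub
        · exact (differentiable_id.sub (differentiable_const 1)).differentiableOn
        · rw [interior_Icc]
          intro s hs
          exact (Real.differentiableAt_log (ne_of_gt (lt_trans ht0 hs.1))).differentiableWithinAt
      · apply DifferentiableOn.div_const
        exact (((differentiable_const 1).sub differentiable_id).pow 2).differentiableOn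
    · rw [interior_Icc]
      intro s hs
      have hs0 : 0 < s := lt_trans ht0 hs.1
      have H1 : HasDerivAt (fun s : ℝ => s - 1 - Real.log s) (1 - s⁻¹) s :=
        (((hasDerivAt_id s).sub_const 1).sub (Real.hasDerivAt_log hs0.ne'))
      have H2 : HasDerivAt (fun s : ℝ => (1 - s) ^ 2 / 2)
          ((2 * (1 - s) ^ 1 * (0 - 1)) / 2) s :=
        (((hasDerivAt_const s (1:ℝ)).sub (hasDerivAt_id s)).pow 2).div_const 2
      have H : HasDerivAt f ((1 - s⁻¹) - (2 * (1 - s) ^ 1 * (0 - 1)) / 2) s := H1.sub H2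
      rw [H.deriv]
      have h1 : (1 - s⁻¹) - (2 * (1 - s) ^ 1 * (0 - 1)) / 2 = -((s - 1) ^ 2 / s) := by
        field_simp
        ring
      rw [h1]
      have : 0 ≤ (s - 1) ^ 2 / s := div_nonneg (sq_nonneg _) hs0.le
      linarith
  have h2 : f 1 ≤ f t :=
    key (Set.mem_Icc.mpr ⟨le_refl t, ht1⟩) (Set.mem_Icc.mpr ⟨ht1, le_refl 1⟩) ht1
  simp only [hf, Real.log_one] at h2
  norm_num at h2
  linarith

lemma log_barrier_aux_ge_one (t : ℝ) (ht1 : 1 ≤ t) :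
    t - 1 - Real.log t ≥ (t - 1) ^ 2 / (2 * t) := by
  have ht0 : 0 < t := lt_of_lt_of_le one_pos ht1
  set g : ℝ → ℝ := fun s => s / 2 - 1 / (2 * s) - Real.log s with hg
  have key : MonotoneOn g (Set.Icc 1 t) := by
    apply monotoneOn_of_deriv_nonneg (convex_Icc 1 t)
    · apply ContinuousOn.sub
      · apply ContinuousOn.sub
        · fun_prop
        · apply ContinuousOn.div continuousOn_const (by fun_prop)
          intro s hs
          have : (0:ℝ) < s := lt_of_lt_of_le one_pos hs.1
          positivity
      · exact Real.continuousOn_log.mono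
          (fun s hs => ne_of_gt (lt_of_lt_of_le one_pos hs.1))
    · rw [interior_Icc]
      apply DifferentiableOn.sub
      · apply DifferentiableOn.sub
        · exact (differentiable_id.div_const 2).differentiableOn
        · intro s hs
          have hs0 : (0:ℝ) < s := lt_trans one_pos hs.1
          apply DifferentiableWithinAt.div (differentiableWithinAt_const 1)
          · fun_prop
          · positivity
      · intro s hs
        exact (Real.differentiableAt_log (ne_of_gt (lt_trans one_pos hs.1))).differentiableWithinAt
    · rw [interior_Icc]
      intro s hs
      have hs0 : 0 < s := lt_trans one_pos hs.1
      have H1 : HasDerivAt (fun s : ℝ => s / 2) (1 / 2) s := by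
        simpa using (hasDerivAt_id s).div_const 2
      have heq : (fun s : ℝ => 1 / (2 * s)) = fun s : ℝ => (1 / 2) * s⁻¹ := by
        funext u; rw [one_div, mul_inv]; ring
      have H2 : HasDerivAt (fun s : ℝ => 1 / (2 * s)) ((1 / 2) * -(s ^ 2)⁻¹) s := by
        rw [heq]; exact (hasDerivAt_inv hs0.ne').const_mul (1 / 2)
      have H3 : HasDerivAt Real.log s⁻¹ s := Real.hasDerivAt_log hs0.ne'
      have H : HasDerivAt g (1 / 2 - (1 / 2) * -(s ^ 2)⁻¹ - s⁻¹) s := (H1.sub H2).sub H3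
      rw [H.deriv]
      have h1 : 1 / 2 - (1 / 2) * -(s ^ 2)⁻¹ - s⁻¹ = (s - 1) ^ 2 / (2 * s ^ 2) := by
        field_simp
        ring
      rw [h1]
      positivity
  have h2 : g 1 ≤ g t :=
    key (Set.mem_Icc.mpr ⟨le_refl 1, ht1⟩) (Set.mem_Icc.mpr ⟨ht1, le_refl t⟩) ht1
  simp only [hg, Real.log_one] at h2
  norm_num at h2
  have expand : (t - 1) ^ 2 / (2 * t) = t / 2 - 1 + 1 / (2 * t) := by
    field_simp
    ring
  rw [expand]
  have h3 : 1 / (2 * t) = t⁻¹ * (1 / 2) := by rw [one_div, mul_inv]; ring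
  rw [h3]
  linarith

theorem log_barrier_local_norm_lower_bound
    (x y : ℝ) (hx0 : 0 < x) (hx1 : x ≤ 1) (hy0 : 0 < y) (hy1 : y ≤ 1) :
    y / x - 1 - Real.log (y / x) ≥ (x - y) ^ 2 / (2 * x) := by
  have ht0 : 0 < y / x := div_pos hy0 hx0
  rcases le_total y x with hyx | hxy
  · have ht1 : y / x ≤ 1 := (div_le_one hx0).mpr hyx
    have h := log_barrier_aux_le_one (y / x) ht0 ht1
    have hrhs : (x - y) ^ 2 / (2 * x) ≤ (1 - y / x) ^ 2 / 2 := by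
      rw [div_le_div_iff₀ (by positivity) (by norm_num)]
      have h1 : (1 - y / x) ^ 2 = (x - y) ^ 2 / x ^ 2 := by
        field_simp
      rw [h1]
      rw [div_mul_eq_mul_div, le_div_iff₀ (by positivity)]
      nlinarith [mul_nonneg (mul_nonneg (sq_nonneg (x - y)) hx0.le) (sub_nonneg.mpr hx1)]
    linarith
  · have ht1 : 1 ≤ y / x := (one_le_div hx0).mpr hxy
    have h := log_barrier_aux_ge_one (y / x) ht1
    have hrhs : (x - y) ^ 2 / (2 * x) ≤ (y / x - 1) ^ 2 / (2 * (y / x)) := by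
      have h1 : (y / x - 1) ^ 2 / (2 * (y / x)) = (x - y) ^ 2 / (2 * x * y) := by
        field_simp
        ring
      rw [h1]
      apply div_le_div_of_nonneg_left (sq_nonneg _) (by positivity)
      nlinarith
    linarith
end

section
/- Let ψ be a potential, u in its domain, and φ(u) ≥ 0 with u + φ(u) in the domain of ψ. Set x = ψ(u), m = (ψ(u+φ(u)) - ψ(u))/φ(u) (taking m = ψ'(u) if φ(u) = 0), and let f be an antiderivative of ψ⁻¹. Then for every y with 0 < y ≤ ψ(u + φ(u)), Breg_f(y‖x) ≥ (x-y)²/(2m). -/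
/-!
Compose with `ψ`: for `x = ψ u`, the function
`G w = Breg_f(ψ w ‖ x) - (x - ψ w)² / (2m)` has derivative `ψ' w / m * (m (w - u) - (ψ w - ψ u))`,
because `f' (ψ w) = w`. By convexity the chord slope `m` dominates the slope of `ψ` between `u` and
any `w ≤ u + φ`, on either side of `u`, so `G'` has the sign of `w - u`; hence `G` is minimal at
`u`, where it vanishes. Every `y ∈ (0, ψ (u + φ)]` is some `ψ v` with `v ≤ u + φ`.
-/

open Filter Set

/-- A potential function `ψ : (-∞, a) → (0, ∞)`: convex, strictly increasing,
continuously differentiable, tending to `0` at `-∞` and to `+∞` at `a`. -/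
structure IsPotential (a : EReal) (ψ : ℝ → ℝ) : Prop where
  convexOn : ConvexOn ℝ {x : ℝ | (x : EReal) < a} ψ
  strictMonoOn : StrictMonoOn ψ {x : ℝ | (x : EReal) < a}
  pos : ∀ x : ℝ, (x : EReal) < a → 0 < ψ x
  diff : ∀ x : ℝ, (x : EReal) < a → DifferentiableAt ℝ ψ x
  contDeriv : ContinuousOn (deriv ψ) {x : ℝ | (x : EReal) < a}
  tendsto_bot : Tendsto ψ atBot (nhds 0)
  tendsto_top : Tendsto ψ
    (comap (fun x : ℝ => (x : EReal)) (nhdsWithin a (Set.Iio a))) atTop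

/-- The slope `m` of the theorem. -/
noncomputable def chordSlope (ψ : ℝ → ℝ) (u φ : ℝ) : ℝ :=
  if φ = 0 then deriv ψ u else (ψ (u + φ) - ψ u) / φ

lemma chordSlope_of_ne_zero {ψ : ℝ → ℝ} {u φ : ℝ} (hφ : φ ≠ 0) :
    chordSlope ψ u φ = slope ψ u (u + φ) := by
  simp [chordSlope, hφ, slope_def_field]

lemma le_of_sub_mul_deriv_nonneg {G G' : ℝ → ℝ} {u v : ℝ}
    (hG : ∀ w ∈ uIcc u v, HasDerivAt G (G' w) w)
    (hG' : ∀ w ∈ uIcc u v, 0 ≤ (w - u) * G' w) : G u ≤ G v := by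
  have hcont : ContinuousOn G (uIcc u v) := fun w hw => (hG w hw).continuousAt.continuousWithinAt
  have hdiff : DifferentiableOn ℝ G (interior (uIcc u v)) := fun w hw =>
    (hG w (interior_subset hw)).differentiableAt.differentiableWithinAt
  rcases le_total u v with huv | hvu
  · rw [uIcc_of_le huv] at hG hG' hcont hdiff
    refine monotoneOn_of_deriv_nonneg (convex_Icc u v) hcont hdiff (fun w hw => ?_)
      (left_mem_Icc.2 huv) (right_mem_Icc.2 huv) huv
    rw [interior_Icc] at hw
    rw [(hG w (Ioo_subset_Icc_self hw)).deriv]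
    exact nonneg_of_mul_nonneg_right (hG' w (Ioo_subset_Icc_self hw)) (sub_pos.2 hw.1)
  · rw [uIcc_of_ge hvu] at hG hG' hcont hdiff
    refine antitoneOn_of_deriv_nonpos (convex_Icc v u) hcont hdiff (fun w hw => ?_)
      (left_mem_Icc.2 hvu) (right_mem_Icc.2 hvu) hvu
    rw [interior_Icc] at hw
    rw [(hG w (Ioo_subset_Icc_self hw)).deriv]
    exact nonpos_of_mul_nonneg_right (hG' w (Ioo_subset_Icc_self hw)) (sub_neg.2 hw.2)

namespace ConvexOn

variable {s : Set ℝ} {ψ : ℝ → ℝ} {u φ w : ℝ}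

lemma deriv_le_chordSlope (hψ : ConvexOn ℝ s ψ) (hu : u ∈ s) (huφ : u + φ ∈ s) (hφ : 0 ≤ φ)
    (hd : DifferentiableAt ℝ ψ u) : deriv ψ u ≤ chordSlope ψ u φ := by
  rcases hφ.eq_or_lt with rfl | hφ
  · simp [chordSlope]
  · rw [chordSlope_of_ne_zero hφ.ne']
    exact hψ.deriv_le_slope hu huφ (by linarith) hd

lemma slope_le_chordSlope (hψ : ConvexOn ℝ s ψ) (hu : u ∈ s) (huφ : u + φ ∈ s) (hφ : 0 ≤ φ)
    (hd : DifferentiableAt ℝ ψ u) (hw : w ∈ s) (hwu : w ≠ u) (hwφ : w ≤ u + φ) :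
    slope ψ u w ≤ chordSlope ψ u φ := by
  rcases hwu.lt_or_gt with hwu | hwu
  · rw [slope_comm]
    exact (hψ.slope_le_deriv hw hu hwu hd).trans (hψ.deriv_le_chordSlope hu huφ hφ hd)
  · rw [chordSlope_of_ne_zero (by linarith)]
    exact hψ.slope_mono hu ⟨hw, hwu.ne'⟩ ⟨huφ, by simp; linarith⟩ hwφ

lemma sub_mul_chordSlope_nonneg (hψ : ConvexOn ℝ s ψ) (hu : u ∈ s) (huφ : u + φ ∈ s)
    (hφ : 0 ≤ φ) (hd : DifferentiableAt ℝ ψ u) (hw : w ∈ s) (hwφ : w ≤ u + φ) :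
    0 ≤ (w - u) * (chordSlope ψ u φ * (w - u) - (ψ w - ψ u)) := by
  rcases eq_or_ne w u with rfl | hwu
  · simp
  have hslope := hψ.slope_le_chordSlope hu huφ hφ hd hw hwu hwφ
  have hψw : ψ w - ψ u = (w - u) * slope ψ u w := by
    rw [slope_def_field, mul_div_cancel₀ _ (sub_ne_zero.2 hwu)]
  rw [hψw, show (w - u) * (chordSlope ψ u φ * (w - u) - (w - u) * slope ψ u w)
    = (w - u) ^ 2 * (chordSlope ψ u φ - slope ψ u w) by ring]
  exact mul_nonneg (sq_nonneg _) (sub_nonneg.2 hslope)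

end ConvexOn

namespace IsPotential

variable {a : EReal} {ψ : ℝ → ℝ} {w x y : ℝ}

lemma deriv_pos (hψ : IsPotential a ψ) (hw : (w : EReal) < a) : 0 < deriv ψ w := by
  have hw₁ : ((w - 1 : ℝ) : EReal) < a := (EReal.coe_lt_coe_iff.2 (by linarith)).trans hw
  have hslope := hψ.convexOn.slope_le_deriv hw₁ hw (by linarith) (hψ.diff w hw)
  have hψ₁ := hψ.strictMonoOn hw₁ hw (by linarith)
  rw [slope_def_field, sub_sub_cancel, div_one] at hslope
  linarith

lemma exists_eq_of_le (hψ : IsPotential a ψ) (hx : (x : EReal) < a) (hy : 0 < y)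
    (hyx : y ≤ ψ x) : ∃ v ≤ x, ψ v = y := by
  obtain ⟨w, hwx, hwy⟩ :=
    ((eventually_le_atBot x).and (hψ.tendsto_bot.eventually (eventually_lt_nhds hy))).exists
  have hcont : ContinuousOn ψ (Icc w x) := fun v hv =>
    (hψ.diff v ((EReal.coe_le_coe_iff.2 hv.2).trans_lt hx)).continuousAt.continuousWithinAt
  obtain ⟨v, hv, hψv⟩ := intermediate_value_Icc hwx hcont ⟨hwy.le, hyx⟩
  exact ⟨v, hv.2, hψv⟩

end IsPotential

lemma hasDerivAt_bregman_sub_sq {f ψ : ℝ → ℝ} {ψ' c u m w : ℝ} (hm : m ≠ 0)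
    (hf : HasDerivAt f w (ψ w)) (hψ : HasDerivAt ψ ψ' w) :
    HasDerivAt (fun w => f (ψ w) - f c - u * (ψ w - c) - (c - ψ w) ^ 2 / (2 * m))
      (ψ' / m * (m * (w - u) - (ψ w - c))) w := by
  have := (((hf.comp w hψ).sub_const (f c)).sub ((hψ.sub_const c).const_mul u)).sub
    (((hψ.const_sub c).pow 2).div_const (2 * m))
  refine this.congr_deriv ?_
  field_simp
  ring

/-- Local-norm lower bound for the Bregman divergence of `f_ψ`. -/
theorem bregman_local_norm_lower_bound (a : EReal) (ψ : ℝ → ℝ)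
    (hψ : IsPotential a ψ)
    (f : ℝ → ℝ) (hf : ∀ w : ℝ, (w : EReal) < a → HasDerivAt f w (ψ w))
    (u φu : ℝ) (hu : (u : EReal) < a) (hφ0 : 0 ≤ φu)
    (huφ : ((u + φu : ℝ) : EReal) < a)
    (m : ℝ) (hm : m = if φu = 0 then deriv ψ u else (ψ (u + φu) - ψ u) / φu) :
    ∀ y : ℝ, 0 < y → y ≤ ψ (u + φu) →
      f y - f (ψ u) - u * (y - ψ u) ≥ (ψ u - y) ^ 2 / (2 * m) := by
  intro y hy hyψ
  replace hm : m = chordSlope ψ u φu := hm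
  have hdom : ∀ w ≤ u + φu, (w : EReal) < a := fun w hw =>
    (EReal.coe_le_coe_iff.2 hw).trans_lt huφ
  have hm_pos : 0 < m := hm ▸ (hψ.deriv_pos hu).trans_le
    (hψ.convexOn.deriv_le_chordSlope hu huφ hφ0 (hψ.diff u hu))
  obtain ⟨v, hv, rfl⟩ := hψ.exists_eq_of_le huφ hy hyψ
  have hle : ∀ w ∈ uIcc u v, w ≤ u + φu := fun w hw => hw.2.trans (max_le (by linarith) hv)
  have hmin := le_of_sub_mul_deriv_nonneg (u := u) (v := v)
    (fun w hw => hasDerivAt_bregman_sub_sq (c := ψ u) (u := u) hm_pos.ne'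
      (hf w (hdom w (hle w hw))) (hψ.diff w (hdom w (hle w hw))).hasDerivAt)
    (fun w hw => by
      rw [mul_left_comm]
      refine mul_nonneg (div_nonneg (hψ.deriv_pos (hdom w (hle w hw))).le hm_pos.le) ?_
      exact hm ▸ hψ.convexOn.sub_mul_chordSlope_nonneg hu huφ hφ0 (hψ.diff u hu)
        (hdom w (hle w hw)) (hle w hw))
  simp only [sub_self, mul_zero, zero_pow two_ne_zero, zero_div] at hmin
  linarith
end

section
/- Let L > 0, A > 0, α > 0, β > 0, and let M₁,...,M_T be a sequence of reals with 0 ≤ M_t ≤ L for all t. Define a_t = α/(β + Σ_{s≤t} M_s) for t = 0,...,T. Suppose g₁,...,g_T ≥ 0 satisfy M_t/a_{t-1} ≤ g_t for each t. Then A/a_T + Σ_{t=1}^T M_t ≤ A(β/α + L/α) + L + √(2 Σ_{t=1}^T g_t) · (A/√α + √α). -/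
theorem adaftrl_summation_bound
    (T : ℕ) (L A α β : ℝ) (hL : 0 < L) (hA : 0 < A) (hα : 0 < α) (hβ : 0 < β)
    (M g : ℕ → ℝ)
    (hM0 : ∀ t ∈ Finset.range T, 0 ≤ M t) (hML : ∀ t ∈ Finset.range T, M t ≤ L)
    (a : ℕ → ℝ) (ha : ∀ t, a t = α / (β + ∑ s ∈ Finset.range t, M s))
    (hg0 : ∀ t ∈ Finset.range T, 0 ≤ g t)
    (hg : ∀ t ∈ Finset.range T, M t / a t ≤ g t) :
    A / a T + ∑ t ∈ Finset.range T, M t ≤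
      A * (β / α + L / α) + L +
        Real.sqrt (2 * ∑ t ∈ Finset.range T, g t) * (A / Real.sqrt α + Real.sqrt α) := by
  set S := ∑ t ∈ Finset.range T, M t with hSdef
  set G := ∑ t ∈ Finset.range T, g t with hGdef
  have hS0 : 0 ≤ S := Finset.sum_nonneg hM0
  have hG0 : 0 ≤ G := Finset.sum_nonneg hg0
  set r := Real.sqrt α with hrdef
  have hr : 0 < r := Real.sqrt_pos.mpr hα
  have hr2 : r ^ 2 = α := Real.sq_sqrt hα.le
  -- partial sums
  have hpart : ∀ t ∈ Finset.range T, 0 ≤ ∑ s ∈ Finset.range t, M s := by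
    intro t ht
    exact Finset.sum_nonneg fun s hs => hM0 s (Finset.mem_range.mpr
      ((Finset.mem_range.mp hs).trans (Finset.mem_range.mp ht)))
  -- key identity
  have hid : ∀ n, (∑ t ∈ Finset.range n, M t) ^ 2
      = ∑ t ∈ Finset.range n, (2 * M t * (∑ s ∈ Finset.range t, M s) + (M t) ^ 2) := by
    intro n
    induction n with
    | zero => simp
    | succ n ih => rw [Finset.sum_range_succ, Finset.sum_range_succ, ← ih]; ring
  have hMS : ∀ t ∈ Finset.range T, M t * (∑ s ∈ Finset.range t, M s) ≤ α * g t := by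
    intro t ht
    have h1 := hg t ht
    have hden : 0 < β + ∑ s ∈ Finset.range t, M s := by
      have := hpart t ht; linarith
    rw [ha t, div_div_eq_mul_div] at h1
    have h2 : M t * (β + ∑ s ∈ Finset.range t, M s) ≤ α * g t := by
      rw [div_le_iff₀ hα] at h1; linarith [h1]
    have h3 : 0 ≤ M t := hM0 t ht
    nlinarith
  -- S^2 ≤ 2αG + L S
  have hsq : S ^ 2 ≤ 2 * α * G + L * S := by
    calc S ^ 2 = _ := hid T
      _ ≤ ∑ t ∈ Finset.range T, (2 * α * g t + L * M t) := by
          apply Finset.sum_le_sum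
          intro t ht
          have := hMS t ht
          have h3 := hM0 t ht
          have h4 := hML t ht
          nlinarith
      _ = 2 * α * G + L * S := by
          rw [Finset.sum_add_distrib, ← Finset.mul_sum, ← Finset.mul_sum]
  have hsqrt : Real.sqrt (2 * α * G) = r * Real.sqrt (2 * G) := by
    rw [show (2 : ℝ) * α * G = α * (2 * G) by ring, Real.sqrt_mul hα.le]
  have hkey : S ≤ L + r * Real.sqrt (2 * G) := by
    rw [← hsqrt]
    by_cases hc : S ≤ L
    · have := Real.sqrt_nonneg (2 * α * G); linarith
    · push_neg at hc
      have h1 : (S - L) ^ 2 ≤ 2 * α * G := by nlinarith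
      have h2 : S - L ≤ Real.sqrt (2 * α * G) := by
        calc S - L = Real.sqrt ((S - L) ^ 2) := (Real.sqrt_sq (by linarith)).symm
          _ ≤ _ := Real.sqrt_le_sqrt h1
      linarith
  -- finish
  rw [ha T, div_div_eq_mul_div]
  have hden : 0 < β + S := by linarith
  have hAr : A * r / α = A / r := by
    rw [← hr2]; field_simp
  have hmul : (A / α + 1) * S ≤ (A / α + 1) * (L + r * Real.sqrt (2 * G)) := by
    apply mul_le_mul_of_nonneg_left hkey
    positivity
  have heq : (A / α + 1) * (L + r * Real.sqrt (2 * G))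
      = A * L / α + L + Real.sqrt (2 * G) * (A / r + r) := by
    have : (A / α + 1) * (L + r * Real.sqrt (2 * G))
        = A * L / α + L + Real.sqrt (2 * G) * (A * r / α + r) := by ring
    rw [this, hAr]
  rw [heq] at hmul
  have hlhs : A * (β + S) / α + S = A * β / α + (A / α + 1) * S := by ring
  rw [hlhs]
  have : A * (β / α + L / α) = A * β / α + A * L / α := by ring
  rw [this]
  linarith
end

section
/- Let M₁,...,M_T be reals with 0 ≤ M_t ≤ L, let α, β > 0, and set a_t = α/(β + Σ_{s≤t} M_s). If M_t/a_{t-1} ≤ g_t with g_t ≥ 0, then Σ_{t=1}^T M_t ≤ √(2α Σ_{t=1}^T g_t) + L. -/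
theorem adaftrl_mixability_sum_bound
    (T : ℕ) (L α β : ℝ) (hL : 0 ≤ L) (hα : 0 < α) (hβ : 0 < β)
    (M g : ℕ → ℝ)
    (hM0 : ∀ t ∈ Finset.range T, 0 ≤ M t) (hML : ∀ t ∈ Finset.range T, M t ≤ L)
    (a : ℕ → ℝ) (ha : ∀ t, a t = α / (β + ∑ s ∈ Finset.range t, M s))
    (hg0 : ∀ t ∈ Finset.range T, 0 ≤ g t)
    (hg : ∀ t ∈ Finset.range T, M t / a t ≤ g t) :
    ∑ t ∈ Finset.range T, M t ≤
      Real.sqrt (2 * α * ∑ t ∈ Finset.range T, g t) + L := by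
  set S : ℕ → ℝ := fun n => ∑ s ∈ Finset.range n, M s with hS
  -- nonnegativity of partial sums
  have hSnn : ∀ n ≤ T, 0 ≤ S n := by
    intro n hn
    apply Finset.sum_nonneg
    intro i hi
    exact hM0 i (Finset.mem_range.2 (lt_of_lt_of_le (Finset.mem_range.1 hi) hn))
  -- key algebraic identity
  have key : ∀ n, (S n) ^ 2 = (∑ t ∈ Finset.range n, (M t) ^ 2)
      + 2 * ∑ t ∈ Finset.range n, M t * S t := by
    intro n
    induction n with
    | zero => simp [hS]
    | succ k ih =>
      have hs : S (k + 1) = S k + M k := by simp [hS, Finset.sum_range_succ]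
      rw [Finset.sum_range_succ, Finset.sum_range_succ, hs]
      ring_nf
      ring_nf at ih
      nlinarith [ih]
  -- bound each term
  have hterm : ∀ t ∈ Finset.range T, M t * S t ≤ α * g t := by
    intro t ht
    have htT := Finset.mem_range.1 ht
    have hSt : 0 ≤ S t := hSnn t htT.le
    have hpos : 0 < β + S t := by linarith
    have hat : a t = α / (β + S t) := ha t
    have hapos : 0 < a t := by rw [hat]; positivity
    have := hg t ht
    rw [div_le_iff₀ hapos] at this
    have : M t ≤ g t * (α / (β + S t)) := by rwa [hat] at this
    have h2 : M t * (β + S t) ≤ g t * α := by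
      rw [div_eq_mul_inv] at this
      have := mul_le_mul_of_nonneg_right this hpos.le
      calc M t * (β + S t) ≤ g t * (α * (β + S t)⁻¹) * (β + S t) := this
        _ = g t * α := by field_simp
    nlinarith [hM0 t ht, hβ]
  have hsum : ∑ t ∈ Finset.range T, M t * S t ≤ α * ∑ t ∈ Finset.range T, g t := by
    rw [Finset.mul_sum]
    exact Finset.sum_le_sum hterm
  have hsq : ∑ t ∈ Finset.range T, (M t) ^ 2 ≤ L * S T := by
    rw [hS, Finset.mul_sum]
    apply Finset.sum_le_sum
    intro t ht
    have := hM0 t ht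
    have := hML t ht
    nlinarith
  have hGnn : 0 ≤ 2 * α * ∑ t ∈ Finset.range T, g t := by
    have : 0 ≤ ∑ t ∈ Finset.range T, g t := Finset.sum_nonneg hg0
    positivity
  have hmain : (S T) ^ 2 ≤ L * S T + 2 * α * ∑ t ∈ Finset.range T, g t := by
    have := key T
    nlinarith [hsum, hsq]
  have hST : 0 ≤ S T := hSnn T le_rfl
  have hsqrt : 0 ≤ Real.sqrt (2 * α * ∑ t ∈ Finset.range T, g t) := Real.sqrt_nonneg _
  by_cases hcase : S T ≤ L
  · calc S T ≤ L := hcase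
      _ ≤ _ := by linarith
  · push_neg at hcase
    have h1 : (S T - L) ^ 2 ≤ 2 * α * ∑ t ∈ Finset.range T, g t := by nlinarith
    have h2 : S T - L ≤ Real.sqrt (2 * α * ∑ t ∈ Finset.range T, g t) := by
      calc S T - L ≤ |S T - L| := le_abs_self _
        _ = Real.sqrt ((S T - L) ^ 2) := (Real.sqrt_sq_eq_abs _).symm
        _ ≤ _ := Real.sqrt_le_sqrt h1
    linarith
end

section
/- For p, q in the probability simplex Δₙ with positive coordinates, the log-barrier Bregman divergence satisfies Breg_F(q‖p) = Σᵢ (qᵢ/pᵢ - 1 - log(qᵢ/pᵢ)) ≥ (1/2) Σᵢ (pᵢ - qᵢ)²/pᵢ. -/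
/-!
The inequality holds term by term. With `t = qᵢ / pᵢ`, the two classical logarithm bounds
`log t ≤ (t - 1) - (t - 1)² / 2` for `t ≤ 1` (the series of `-log (1 - u)`) and
`log t ≤ (t - t⁻¹) / 2` for `t ≥ 1` give `t - 1 - log t ≥ (t - 1)² / (2 max 1 t)`, and
`pᵢ, qᵢ ≤ 1` turns the right-hand side into `(pᵢ - qᵢ)² / (2 pᵢ)`.
-/
open Real Finset

namespace Real

lemma log_le_sub_one_sub_sq_div_two {t : ℝ} (h₀ : 0 < t) (h₁ : t ≤ 1) :
    log t ≤ t - 1 - (t - 1) ^ 2 / 2 := by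
  have hu : |1 - t| < 1 := abs_lt.2 ⟨by linarith, by linarith⟩
  have h := sum_le_hasSum (range 2) (fun n _ => by positivity)
    (hasSum_pow_div_log_of_abs_lt_one hu)
  simp only [sum_range_succ, sum_range_zero, sub_sub_cancel] at h
  norm_num at h
  nlinarith

lemma log_le_sub_inv_div_two {t : ℝ} (h : 1 ≤ t) : log t ≤ (t - t⁻¹) / 2 := by
  set x := (t - 1) / (t + 1) with hx
  have hx₀ : 0 ≤ x := div_nonneg (by linarith) (by linarith)
  have hx₁ : x < 1 := (div_lt_one (by linarith)).2 (by linarith)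
  have hlog : (1 + x) / (1 - x) = t := by
    rw [hx]; field_simp; ring
  have hbound : x / (1 - x ^ 2) = (t - t⁻¹) / 4 := by
    rw [div_eq_iff (by nlinarith), hx]
    field_simp
    ring
  have := log_div_le_sum_range_add hx₀ hx₁ 0
  rw [hlog, sum_range_zero, zero_add, mul_zero, zero_add, pow_one, hbound] at this
  linarith

end Real

lemma sq_sub_div_two_mul_le_div_sub_one_sub_log {a b : ℝ} (ha : 0 < a) (hb : 0 < b)
    (ha₁ : a ≤ 1) (hb₁ : b ≤ 1) : (a - b) ^ 2 / (2 * a) ≤ b / a - 1 - log (b / a) := by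
  rcases le_total b a with hba | hab
  · have hlog := log_le_sub_one_sub_sq_div_two (div_pos hb ha) ((div_le_one ha).2 hba)
    have : (a - b) ^ 2 / (2 * a) ≤ (b / a - 1) ^ 2 / 2 := by
      rw [div_sub_one ha.ne', div_pow, div_div, div_le_div_iff₀ (by positivity) (by positivity)]
      nlinarith [sq_nonneg (a - b), mul_nonneg (sq_nonneg (a - b)) (sub_nonneg.2 ha₁)]
    linarith
  · have hlog := log_le_sub_inv_div_two ((one_le_div ha).2 hab)
    have : (a - b) ^ 2 / (2 * a) ≤ b / a - 1 - (b / a - (b / a)⁻¹) / 2 := by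
      rw [inv_div, div_sub_div _ _ ha.ne' hb.ne', div_sub_one ha.ne']
      rw [div_le_iff₀ (by positivity)]
      field_simp
      nlinarith [sq_nonneg (a - b), mul_nonneg (sq_nonneg (a - b)) (sub_nonneg.2 hb₁)]
    linarith

theorem log_barrier_bregman_simplex_lower_bound_general (n : ℕ)
    (p q : Fin n → ℝ) (hp : ∀ i, 0 < p i) (hq : ∀ i, 0 < q i)
    (hpsum : ∑ i, p i = 1) (hqsum : ∑ i, q i = 1) :
    (∑ i, (q i / p i - 1 - Real.log (q i / p i))) ≥
      (1 / 2) * ∑ i, (p i - q i) ^ 2 / p i := by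
  have le_one {r : Fin n → ℝ} (hr : ∀ i, 0 < r i) (hsum : ∑ i, r i = 1) (i : Fin n) : r i ≤ 1 :=
    hsum ▸ single_le_sum (fun j _ => (hr j).le) (mem_univ i)
  rw [mul_sum, ge_iff_le]
  refine sum_le_sum fun i _ => ?_
  rw [one_div_mul_eq_div, div_div, mul_comm (p i) 2]
  exact sq_sub_div_two_mul_le_div_sub_one_sub_log (hp i) (hq i) (le_one hp hpsum i)
    (le_one hq hqsum i)

theorem log_barrier_bregman_simplex_lower_bound (n : ℕ) (hn : 1 ≤ n)
    (p q : Fin n → ℝ) (hp : ∀ i, 0 < p i) (hq : ∀ i, 0 < q i)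
    (hpsum : ∑ i, p i = 1) (hqsum : ∑ i, q i = 1) :
    (∑ i, (q i / p i - 1 - Real.log (q i / p i))) ≥
      (1 / 2) * ∑ i, (p i - q i) ^ 2 / p i :=
  log_barrier_bregman_simplex_lower_bound_general n p q hp hq hpsum hqsum
end
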